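/- arXiv:2104.01828 — 3 statements merged into one kernel-verified Lean document; each statement's English description precedes it below -/
import Mathlib

section
/- With ε = β/(2(2N−1)), we have (r − ε)K + N·L > n/2, where n = K + N·L + M and r = 1/2 − β. That is, if at least (r−ε)K of the K isolated voters vote correctly, the additional N·L element voters voting correctly suffices for a strict weighted majority. -/
/- Writing `n = K + N·L + M`, the claim is `N·L > 2(β + ε)K + M`. The choice of `ε` makes
`2(β + ε) = β(4N−1)/(2N−1)`, and `L` exceeds `x := β(4N−1)K/(N(2N−1)) + M/N` (it is `⌊x⌋ + 1`),
where `N·x = 2(β + ε)K + M` exactly. -/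

lemma mul_quotient_eq_two_mul_add_eps (β K M N : ℝ) (hN : N ≠ 0) (hN' : 2 * N - 1 ≠ 0) :
    N * (β * (4 * N - 1) * K / (N * (2 * N - 1)) + M / N)
      = (2 * β + 2 * (β / (2 * (2 * N - 1)))) * K + M := by
  rw [div_add_div _ _ (mul_ne_zero hN hN') hN, mul_div_assoc', eq_comm, eq_div_iff (by positivity)]
  field_simp
  ring

lemma two_mul_add_eps_lt_mul_floor_add_one (β K M N : ℝ) (hN : 1 ≤ N) :
    (2 * β + 2 * (β / (2 * (2 * N - 1)))) * K + M
      < N * (⌊β * (4 * N - 1) * K / (N * (2 * N - 1)) + M / N⌋ + 1) := by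
  rw [← mul_quotient_eq_two_mul_add_eps β K M N (by positivity) (by linarith)]
  exact mul_lt_mul_of_pos_left (Int.lt_floor_add_one _) (by positivity)

theorem stmt_1_general (β : ℝ) (N M : ℕ) (hN0 : 0 < N)
    (r ε K L n : ℝ)
    (hr : r = 1/2 - β)
    (hε : ε = β / (2 * (2 * N - 1)))
    (hL : L = ⌊β * (4 * N - 1) * K / (N * (2 * N - 1)) + M / N⌋ + 1)
    (hn : n = K + N * L + M) :
    (r - ε) * K + N * L > n / 2 := by
  have hNL := two_mul_add_eps_lt_mul_floor_add_one β K M N (by exact_mod_cast hN0)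
  rw [← hε, ← hL] at hNL
  rw [hn, hr]
  linarith

/-- Lemma "enough": with `ε = β/(2(2N−1))`, we have `(r − ε)K + N·L > n/2`. -/
theorem stmt_1 (β : ℝ) (hβ : 0 < β ∧ β < 1/2) (N M : ℕ) (hN0 : 0 < N) (hM0 : 0 < M)
    (r ε K L n : ℝ)
    (hr : r = 1/2 - β)
    (hε : ε = β / (2 * (2 * N - 1)))
    (hK : K = 8 * N ^ 2 * M / β ^ 2)
    (hL : L = ⌊β * (4 * N - 1) * K / (N * (2 * N - 1)) + M / N⌋ + 1)
    (hn : n = K + N * L + M) :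
    (r - ε) * K + N * L > n / 2 :=
  stmt_1_general β N M hN0 r ε K L n hr hε hL hn
end

section
/- With ε = β/(2(2N−1)), for any K' with K ≤ K' ≤ n, we have (β − ε)K' > ((N−1)L + M)/2. Consequently if at most (r+ε)K' of K' voters vote correctly, then even (N−1)L + M additional correct votes cannot reach a majority of n. -/
/-! Bounding the floor in `L` from above, `2(β - ε)K - ((N - 1)L + M)` is at least
`(βK - ((N - 1)M + N(N - 1) + NM)) / N`: the `βK`-terms coming from `β - ε` and from `L`
cancel except for `βK / N`. The largeness condition on `K` gives `βK ≥ 8N²M/β > 16N²M`,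
which dominates the remaining terms, and `(β - ε)K'` only grows with `K'`. -/

section

variable {β N M K : ℝ}

lemma sub_div_two_mul_two_mul_sub_one_pos (hβ : 0 < β) (hN : 1 ≤ N) :
    0 < β - β / (2 * (2 * N - 1)) := by
  have h : β - β / (2 * (2 * N - 1)) = β * (4 * N - 3) / (2 * (2 * N - 1)) := by
    field_simp [show 2 * N - 1 ≠ 0 by linarith]
    ring
  rw [h]
  apply div_pos <;> nlinarith

lemma two_mul_sub_eq_div (hN : N ≠ 0) (hN' : 2 * N - 1 ≠ 0) :
    2 * ((β - β / (2 * (2 * N - 1))) * K)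
        - ((N - 1) * (β * (4 * N - 1) * K / (N * (2 * N - 1)) + M / N + 1) + M)
      = (β * K - ((N - 1) * M + N * (N - 1) + N * M)) / N := by
  field_simp
  ring

lemma lt_mul_of_div_ge (hβ : 0 < β) (hβ' : β < 1 / 2) (hN : 1 ≤ N) (hM : 1 ≤ M)
    (hK : β * K / (2 * N) ≥ 4 / β * N * M) :
    (N - 1) * M + N * (N - 1) + N * M < β * K := by
  have hKβ : 8 * N ^ 2 * M / β ≤ β * K := by
    rw [ge_iff_le, le_div_iff₀ (by positivity)] at hK
    calc 8 * N ^ 2 * M / β = 4 / β * N * M * (2 * N) := by ring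
      _ ≤ β * K := hK
  have h16 : 16 * N ^ 2 * M < 8 * N ^ 2 * M / β := by
    rw [lt_div_iff₀ hβ]
    nlinarith [mul_pos (mul_pos (by positivity : 0 < N ^ 2) (by linarith : 0 < M)) hβ]
  nlinarith [mul_le_mul_of_nonneg_left hM (by linarith : 0 ≤ N),
    mul_le_mul_of_nonneg_left hM (by positivity : 0 ≤ N * N)]

end

theorem stmt_2_general (β : ℝ) (hβ : 0 < β ∧ β < 1/2) (N M : ℕ) (hN0 : 0 < N) (hM0 : 0 < M)
    (ε K L n : ℝ)
    (hε : ε = β / (2 * (2 * N - 1)))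
    (hKbig : β * K / (2 * N) ≥ (4 / β) * N * M)
    (hL : L = ⌊β * (4 * N - 1) * K / (N * (2 * N - 1)) + M / N⌋ + 1) :
    ∀ K' : ℝ, K ≤ K' → K' ≤ n → (β - ε) * K' > ((N - 1) * L + M) / 2 := by
  intro K' hKK' _
  subst hε
  have hN : (1 : ℝ) ≤ N := by exact_mod_cast hN0
  have hM : (1 : ℝ) ≤ M := by exact_mod_cast hM0
  have hL_le : L ≤ β * (4 * N - 1) * K / (N * (2 * N - 1)) + M / N + 1 := by
    rw [hL]
    linarith [Int.floor_le (β * (4 * N - 1) * K / (N * (2 * N - 1)) + (M : ℝ) / N)]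
  have hmargin : 0 < 2 * ((β - β / (2 * (2 * N - 1))) * K)
      - ((N - 1) * (β * (4 * N - 1) * K / (N * (2 * N - 1)) + M / N + 1) + M) := by
    rw [two_mul_sub_eq_div (by positivity) (by linarith)]
    exact div_pos (by linarith [lt_mul_of_div_ge hβ.1 hβ.2 hN hM hKbig]) (by linarith)
  have hK' : (β - β / (2 * (2 * N - 1))) * K ≤ (β - β / (2 * (2 * N - 1))) * K' :=
    mul_le_mul_of_nonneg_left hKK' (sub_div_two_mul_two_mul_sub_one_pos hβ.1 hN).le
  linarith [mul_le_mul_of_nonneg_left hL_le (by linarith : (0 : ℝ) ≤ N - 1)]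

/-- Lemma "not enough": with `ε = β/(2(2N−1))`, for any `K'` with `K ≤ K' ≤ n`,
`(β − ε)K' > ((N−1)L + M)/2`. -/
theorem stmt_2 (β : ℝ) (hβ : 0 < β ∧ β < 1/2) (N M : ℕ) (hN0 : 0 < N) (hM0 : 0 < M)
    (r ε K L n : ℝ)
    (hr : r = 1/2 - β)
    (hε : ε = β / (2 * (2 * N - 1)))
    (hK : K = 8 * N ^ 2 * M / β ^ 2)
    (hKbig : β * K / (2 * N) ≥ (4 / β) * N * M)
    (hL : L = ⌊β * (4 * N - 1) * K / (N * (2 * N - 1)) + M / N⌋ + 1)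
    (hn : n = K + N * L + M) :
    ∀ K' : ℝ, K ≤ K' → K' ≤ n → (β - ε) * K' > ((N - 1) * L + M) / 2 :=
  stmt_2_general β hβ N M hN0 hM0 ε K L n hε hKbig hL
end

section
/- For any odd n and q ∈ [0, 1/2], the probability that a Binomial(n, q) random variable exceeds n/2 is at most q. That is, Σ_{k > n/2} C(n,k) q^k (1−q)^{n−k} ≤ q. -/
/-!
Split off the first of the `n = 2m + 1` voters: the majority is correct iff either at least
`m + 1` of the other `2m` voters are, or exactly `m` are and the first one is. The claim then
reduces to `(1 - q) P(Y > m) ≤ q P(Y < m)` for `Y ~ Binomial(2m, q)`, which holds term by term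
after the reflection `k ↦ 2m - k`, because `q ≤ 1 - q`. Binomial probabilities are the values of
Bernstein polynomials.
-/

open Finset Polynomial

theorem bernsteinPolynomial_succ_succ (R : Type*) [CommRing R] (n k : ℕ) :
    bernsteinPolynomial R (n + 1) (k + 1) =
      X * bernsteinPolynomial R n k + (1 - X) * bernsteinPolynomial R n (k + 1) := by
  simp only [bernsteinPolynomial, Nat.choose_succ_succ, Nat.cast_add, Nat.add_sub_add_right]
  rcases Nat.lt_or_ge k n with hkn | hnk
  · rw [show n - k = n - (k + 1) + 1 by omega]
    ring
  · rw [Nat.choose_eq_zero_of_lt (by omega : n < k + 1)]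
    ring

theorem bernsteinPolynomial_succ_zero (R : Type*) [CommRing R] (n : ℕ) :
    bernsteinPolynomial R (n + 1) 0 = (1 - X) * bernsteinPolynomial R n 0 := by
  simp [bernsteinPolynomial, pow_succ']

theorem sum_mul_eval_bernsteinPolynomial_succ {R : Type*} [CommRing R] (n : ℕ) (c : ℕ → R)
    (x : R) :
    ∑ k ∈ range (n + 2), c k * (bernsteinPolynomial R (n + 1) k).eval x =
      x * ∑ k ∈ range (n + 1), c (k + 1) * (bernsteinPolynomial R n k).eval x +
        (1 - x) * ∑ k ∈ range (n + 1), c k * (bernsteinPolynomial R n k).eval x := by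
  set b := fun k => (bernsteinPolynomial R n k).eval x
  have hshift : ∑ k ∈ range (n + 1), c k * b k =
      ∑ k ∈ range (n + 1), c (k + 1) * b (k + 1) + c 0 * b 0 := by
    rw [← sum_range_succ' (fun k => c k * b k), sum_range_succ _ (n + 1)]
    simp [b, bernsteinPolynomial.eq_zero_of_lt R n.lt_succ_self]
  calc _ = ∑ k ∈ range (n + 1), (x * (c (k + 1) * b k) + (1 - x) * (c (k + 1) * b (k + 1))) +
        (1 - x) * (c 0 * b 0) := by
        rw [sum_range_succ']
        simp only [bernsteinPolynomial_succ_succ, bernsteinPolynomial_succ_zero, eval_add,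
          eval_mul, eval_sub, eval_one, eval_X]
        congr 1
        · exact sum_congr rfl fun k _ => by ring
        · ring
    _ = _ := by
        rw [hshift, sum_add_distrib, ← mul_sum, ← mul_sum]
        ring

theorem pow_mul_pow_le_pow_mul_pow_of_le {R : Type*} [CommSemiring R] [PartialOrder R]
    [IsOrderedRing R] {a b : R} (ha : 0 ≤ a) (hab : a ≤ b) {i j : ℕ} (hij : i ≤ j) :
    a ^ j * b ^ i ≤ a ^ i * b ^ j := by
  obtain ⟨d, rfl⟩ := Nat.exists_eq_add_of_le hij
  have hb : 0 ≤ b := ha.trans hab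
  calc a ^ (i + d) * b ^ i = a ^ i * b ^ i * a ^ d := by ring
    _ ≤ a ^ i * b ^ i * b ^ d := by gcongr
    _ = a ^ i * b ^ (i + d) := by ring

theorem one_sub_mul_eval_bernsteinPolynomial_le {x : ℝ} (hx₀ : 0 ≤ x) (hx : x ≤ 1 / 2) {n k : ℕ}
    (hkn : k ≤ n) (hk : n < 2 * k) :
    (1 - x) * (bernsteinPolynomial ℝ n k).eval x ≤
      x * (bernsteinPolynomial ℝ n (n - k)).eval x := by
  simp only [bernsteinPolynomial, eval_mul, eval_natCast, eval_pow, eval_X, eval_sub, eval_one]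
  rw [Nat.sub_sub_self hkn, Nat.choose_symm hkn]
  have := pow_mul_pow_le_pow_mul_pow_of_le hx₀ (by linarith : x ≤ 1 - x)
    (by omega : n - k + 1 ≤ k)
  calc (1 - x) * (n.choose k * x ^ k * (1 - x) ^ (n - k))
      = n.choose k * (x ^ k * (1 - x) ^ (n - k + 1)) := by ring
    _ ≤ n.choose k * (x ^ (n - k + 1) * (1 - x) ^ k) := by gcongr
    _ = x * (n.choose k * x ^ (n - k) * (1 - x) ^ k) := by ring

theorem one_sub_mul_sum_upper_le {x : ℝ} (hx₀ : 0 ≤ x) (hx : x ≤ 1 / 2) (n : ℕ) :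
    (1 - x) * ∑ k ∈ range (n + 1), (if n < 2 * k then (bernsteinPolynomial ℝ n k).eval x else 0) ≤
      x * ∑ k ∈ range (n + 1), (if 2 * k < n then (bernsteinPolynomial ℝ n k).eval x else 0) := by
  rw [← sum_range_reflect _ (n + 1), mul_sum, mul_sum]
  refine sum_le_sum fun k hk => ?_
  rw [mem_range, Nat.lt_succ_iff] at hk
  rw [show n + 1 - 1 - k = n - k by omega]
  split_ifs with hup hlow hlow
  · simpa only [Nat.sub_sub_self hk] using
      one_sub_mul_eval_bernsteinPolynomial_le hx₀ hx (Nat.sub_le n k) hup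
  · omega
  · omega
  · simp

/-- For odd `n` and `q ∈ [0, 1/2]`, the probability that a `Binomial(n, q)` variable exceeds
`n/2` is at most `q`: the expert rule dominates direct majority voting. -/
theorem stmt_14 (n : ℕ) (hodd : Odd n) (q : ℝ) (h0 : 0 ≤ q) (h1 : q ≤ 1/2) :
    (∑ k ∈ Finset.range (n + 1),
      if 2 * k > n then (n.choose k : ℝ) * q ^ k * (1 - q) ^ (n - k) else 0) ≤ q := by
  obtain ⟨m, rfl⟩ := hodd
  set b := fun k => (bernsteinPolynomial ℝ (2 * m) k).eval q
  have htotal : ∑ k ∈ range (2 * m + 1), b k = 1 := by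
    simp only [b, ← eval_finsetSum, bernsteinPolynomial.sum, eval_one]
  have hsplit : ∑ k ∈ range (2 * m + 1), b k =
      ∑ k ∈ range (2 * m + 1), (if 2 * m + 1 < 2 * (k + 1) then b k else 0) +
        ∑ k ∈ range (2 * m + 1), (if 2 * k < 2 * m then b k else 0) := by
    rw [← sum_add_distrib]
    refine sum_congr rfl fun k _ => ?_
    split_ifs <;> first | omega | simp
  have hupper : ∀ k, (2 * m + 1 < 2 * k ↔ 2 * m < 2 * k) := by omega
  calc _ = ∑ k ∈ range (2 * m + 2), (if 2 * m + 1 < 2 * k then (1 : ℝ) else 0) *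
        (bernsteinPolynomial ℝ (2 * m + 1) k).eval q := by
        refine sum_congr rfl fun k _ => ?_
        simp [bernsteinPolynomial]
    _ = q * ∑ k ∈ range (2 * m + 1), (if 2 * m + 1 < 2 * (k + 1) then b k else 0) +
        (1 - q) * ∑ k ∈ range (2 * m + 1), (if 2 * m < 2 * k then b k else 0) := by
        rw [sum_mul_eval_bernsteinPolynomial_succ]
        simp only [boole_mul, hupper, b]
    _ ≤ q * ∑ k ∈ range (2 * m + 1), b k := by
        rw [hsplit, mul_add]
        exact add_le_add le_rfl (one_sub_mul_sum_upper_le h0 h1 (2 * m))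
    _ = q := by rw [htotal, mul_one]
end
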